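/- Let (π_t)_{t≥0} be a Markov–Feller stochastically continuous semigroup of probability kernels on a metric space (X,ρ). Let φ : X → ℝ be bounded continuous, let z ∈ X, δ > 0, ε > 0 and α ∈ (0,1) be such that: (a) |P_tφ(x) − P_tφ(y)| < ε for all t ≥ 0 and all x, y ∈ B(z,δ); (b) liminf_{t→∞} P_t^*ν(B(z,δ)) > α for every Borel probability measure ν on X. Then for all Borel probability measures μ₁, μ₂ on X, limsup_{t→∞} |∫_X φ dP_t^*μ₁ − ∫_X φ dP_t^*μ₂| ≤ ε. -/

import Mathlib

open MeasureTheory Filter Topology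
open scoped ENNReal

/-- A Markov–Feller stochastically continuous semigroup of probability kernels on a metric
space `X`. -/
structure MarkovFellerSemigroup {X : Type*} [MetricSpace X] [MeasurableSpace X] [BorelSpace X]
    (π : ℝ → X → Measure X) : Prop where
  prob : ∀ t, 0 ≤ t → ∀ x, IsProbabilityMeasure (π t x)
  meas : ∀ t, 0 ≤ t → ∀ A : Set X, MeasurableSet A → Measurable fun x => π t x A
  init : ∀ x, π 0 x = Measure.dirac x
  semigroup : ∀ t, 0 ≤ t → ∀ s, 0 ≤ s → ∀ x, ∀ A : Set X, MeasurableSet A →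
    π (t + s) x A = ∫⁻ y, π s y A ∂(π t x)
  feller : ∀ t, 0 ≤ t → ∀ φ : BoundedContinuousFunction X ℝ,
    Continuous fun x => ∫ y, φ y ∂(π t x)
  stochCont : ∀ φ : BoundedContinuousFunction X ℝ, ∀ x : X,
    Tendsto (fun t => ∫ y, φ y ∂(π t x)) (nhdsWithin 0 (Set.Ioi 0)) (nhds (φ x))

/-!
Once the semigroup has run long enough, each `P_s^* μᵢ` gives mass more than `α` to
`B = B(z,δ)`, so it splits as `α aᵢ + (1 - α) bᵢ` with `aᵢ` a probability measure on `B`. From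
then on the `aᵢ`-parts stay `ε`-close by (a), while the `bᵢ`-parts are again two probability
measures, to which the same argument applies. Starting from the trivial bound `2‖φ‖`, `n`
rounds of this bound the gap eventually by `(1 - (1 - α)ⁿ) ε + (1 - α)ⁿ 2‖φ‖`, which tends to `ε`.
-/

open ProbabilityTheory Set

section General

variable {X : Type*} [MeasurableSpace X]

theorem MeasureTheory.Measure.exists_eq_ofReal_smul_add_ofReal_smul (ν : Measure X)
    [IsProbabilityMeasure ν] {B : Set X} (hB : MeasurableSet B) {α : ℝ} (hα₀ : 0 ≤ α)
    (hα₁ : α < 1) (hαB : ENNReal.ofReal α < ν B) :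
    ∃ μ ν' : Measure X, IsProbabilityMeasure μ ∧ IsProbabilityMeasure ν' ∧ (∀ᵐ x ∂μ, x ∈ B) ∧
      ν = ENNReal.ofReal α • μ + ENNReal.ofReal (1 - α) • ν' := by
  have hνB : ν B ≠ 0 := (hαB.trans_le' bot_le).ne'
  have := cond_isProbabilityMeasure hνB
  have : IsFiniteMeasure (ENNReal.ofReal α • ν[|B]) := Measure.smul_finite _ ENNReal.ofReal_ne_top
  have hle : ENNReal.ofReal α • ν[|B] ≤ ν := fun A ↦ calc
    ENNReal.ofReal α * ν[|B] A ≤ ν[|B] A * ν B := by rw [mul_comm]; gcongr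
    _ = ν (B ∩ A) := cond_mul_eq_inter hB A ν
    _ ≤ ν A := measure_mono inter_subset_right
  have h1α : ENNReal.ofReal (1 - α) ≠ 0 := by simpa using hα₁
  have hrest : (ν - ENNReal.ofReal α • ν[|B]) univ = ENNReal.ofReal (1 - α) := by
    rw [Measure.sub_apply MeasurableSet.univ hle, Measure.smul_apply, measure_univ, measure_univ,
      smul_eq_mul, mul_one, ENNReal.ofReal_sub _ hα₀, ENNReal.ofReal_one]
  refine ⟨ν[|B], (ENNReal.ofReal (1 - α))⁻¹ • (ν - ENNReal.ofReal α • ν[|B]),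
    cond_isProbabilityMeasure hνB, ⟨?_⟩, ae_cond_mem hB, ?_⟩
  · rw [Measure.smul_apply, hrest, smul_eq_mul, ENNReal.inv_mul_cancel h1α ENNReal.ofReal_ne_top]
  · rw [smul_smul, ENNReal.mul_inv_cancel h1α ENNReal.ofReal_ne_top, one_smul, add_comm,
      Measure.sub_add_cancel_of_le hle]

theorem MeasureTheory.integral_ofReal_smul_add_ofReal_smul {μ ν : Measure X} {f : X → ℝ}
    (hμ : Integrable f μ) (hν : Integrable f ν) {α : ℝ} (hα₀ : 0 ≤ α) (hα₁ : α ≤ 1) :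
    ∫ x, f x ∂(ENNReal.ofReal α • μ + ENNReal.ofReal (1 - α) • ν) =
      α * ∫ x, f x ∂μ + (1 - α) * ∫ x, f x ∂ν := by
  rw [integral_add_measure (hμ.smul_measure ENNReal.ofReal_ne_top)
      (hν.smul_measure ENNReal.ofReal_ne_top), integral_smul_measure, integral_smul_measure,
    ENNReal.toReal_ofReal hα₀, ENNReal.toReal_ofReal (sub_nonneg.2 hα₁), smul_eq_mul, smul_eq_mul]

theorem MeasureTheory.abs_integral_sub_integral_le_of_ae_mem {μ ν : Measure X}
    [IsProbabilityMeasure μ] [IsProbabilityMeasure ν] {f : X → ℝ} (hμ : Integrable f μ)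
    (hν : Integrable f ν) {B : Set X} (hμB : ∀ᵐ x ∂μ, x ∈ B) (hνB : ∀ᵐ x ∂ν, x ∈ B) {ε : ℝ}
    (hf : ∀ x ∈ B, ∀ y ∈ B, |f x - f y| ≤ ε) :
    |∫ x, f x ∂μ - ∫ y, f y ∂ν| ≤ ε := by
  have hx : ∀ x ∈ B, |f x - ∫ y, f y ∂ν| ≤ ε := fun x hx ↦ by
    have := norm_integral_le_of_norm_le_const (μ := ν) (f := fun y ↦ f x - f y) (C := ε)
      (hνB.mono fun y hy ↦ hf x hx y hy)
    simpa [integral_sub (integrable_const _) hν] using this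
  have := norm_integral_le_of_norm_le_const (μ := μ) (f := fun x ↦ f x - ∫ y, f y ∂ν) (C := ε)
    (hμB.mono hx)
  simpa [integral_sub hμ (integrable_const _)] using this

theorem MeasureTheory.Measure.integral_comp {Y : Type*} [MeasurableSpace Y] {κ : Kernel X Y}
    {μ : Measure X} {f : Y → ℝ} (hf : Integrable f (κ ∘ₘ μ)) :
    ∫ y, f y ∂(κ ∘ₘ μ) = ∫ x, ∫ y, f y ∂κ x ∂μ := by
  rw [Measure.comp_eq_comp_const_apply] at hf ⊢
  rw [Kernel.integral_comp hf, Kernel.const_apply]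

theorem MeasureTheory.Integrable.integral_kernel_of_comp {Y : Type*} [MeasurableSpace Y]
    {κ : Kernel X Y} {μ : Measure X} {f : Y → ℝ} (hf : Integrable f (κ ∘ₘ μ)) :
    Integrable (fun x ↦ ∫ y, f y ∂κ x) μ := by
  rw [Measure.comp_eq_comp_const_apply] at hf
  simpa using hf.integral_comp

theorem ProbabilityTheory.Kernel.abs_integral_comp_sub_integral_comp_le {Y : Type*}
    [MeasurableSpace Y] {κ : Kernel X Y} {μ ν : Measure X} [IsProbabilityMeasure μ]
    [IsProbabilityMeasure ν] {f : Y → ℝ} (hμ : Integrable f (κ ∘ₘ μ))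
    (hν : Integrable f (κ ∘ₘ ν)) {B : Set X} (hμB : ∀ᵐ x ∂μ, x ∈ B) (hνB : ∀ᵐ x ∂ν, x ∈ B)
    {ε : ℝ} (hf : ∀ x ∈ B, ∀ y ∈ B, |∫ z, f z ∂κ x - ∫ z, f z ∂κ y| ≤ ε) :
    |∫ z, f z ∂(κ ∘ₘ μ) - ∫ z, f z ∂(κ ∘ₘ ν)| ≤ ε := by
  rw [Measure.integral_comp hμ, Measure.integral_comp hν]
  exact abs_integral_sub_integral_le_of_ae_mem hμ.integral_kernel_of_comp
    hν.integral_kernel_of_comp hμB hνB hf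

end General

namespace MarkovFellerSemigroup

variable {X : Type*} [MetricSpace X] [MeasurableSpace X] [BorelSpace X] {π : ℝ → X → Measure X}
  {t : ℝ}

theorem measurable (hπ : MarkovFellerSemigroup π) (ht : 0 ≤ t) : Measurable (π t) :=
  Measure.measurable_of_measurable_coe _ (hπ.meas t ht)

def kernel (hπ : MarkovFellerSemigroup π) (ht : 0 ≤ t) : Kernel X X := ⟨π t, hπ.measurable ht⟩

instance isMarkovKernel_kernel (hπ : MarkovFellerSemigroup π) (ht : 0 ≤ t) :
    IsMarkovKernel (hπ.kernel ht) :=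
  ⟨hπ.prob t ht⟩

theorem bind_eq_comp_kernel (hπ : MarkovFellerSemigroup π) (ht : 0 ≤ t) (μ : Measure X) :
    π t ∘ₘ μ = hπ.kernel ht ∘ₘ μ := rfl

theorem isProbabilityMeasure_bind (hπ : MarkovFellerSemigroup π) (ht : 0 ≤ t) (μ : Measure X)
    [IsProbabilityMeasure μ] : IsProbabilityMeasure (π t ∘ₘ μ) := by
  rw [hπ.bind_eq_comp_kernel ht]; infer_instance

theorem bind_add (hπ : MarkovFellerSemigroup π) {s : ℝ} (hs : 0 ≤ s) (ht : 0 ≤ t)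
    (μ : Measure X) : π (s + t) ∘ₘ μ = π t ∘ₘ (π s ∘ₘ μ) := by
  ext A hA
  rw [Measure.bind_apply hA (hπ.measurable (add_nonneg hs ht)).aemeasurable,
    Measure.bind_apply hA (hπ.measurable ht).aemeasurable,
    Measure.lintegral_bind (hπ.measurable hs).aemeasurable
      (hπ.meas t ht A hA).aemeasurable]
  exact lintegral_congr fun x ↦ hπ.semigroup s hs t ht x A hA

theorem bind_add_sub (hπ : MarkovFellerSemigroup π) {s : ℝ} (hs : 0 ≤ s) (hst : s ≤ t)
    (μ : Measure X) : π (t - s) ∘ₘ (π s ∘ₘ μ) = π t ∘ₘ μ := by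
  rw [← hπ.bind_add hs (sub_nonneg.2 hst), add_sub_cancel]

theorem eventually_abs_integral_bind_sub_le_of_eventually_le (hπ : MarkovFellerSemigroup π)
    (φ : BoundedContinuousFunction X ℝ) {B : Set X} (hB : MeasurableSet B) {ε α C : ℝ}
    (hα₀ : 0 ≤ α) (hα₁ : α < 1)
    (hosc : ∀ t, 0 ≤ t → ∀ x ∈ B, ∀ y ∈ B, |∫ v, φ v ∂(π t x) - ∫ v, φ v ∂(π t y)| ≤ ε)
    (hC : ∀ ν₁ ν₂ : Measure X, IsProbabilityMeasure ν₁ → IsProbabilityMeasure ν₂ →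
      ∀ᶠ t in atTop, |∫ x, φ x ∂(π t ∘ₘ ν₁) - ∫ x, φ x ∂(π t ∘ₘ ν₂)| ≤ C)
    {μ₁ μ₂ : Measure X} [IsProbabilityMeasure μ₁] [IsProbabilityMeasure μ₂]
    (h₁ : ENNReal.ofReal α < liminf (fun t ↦ (π t ∘ₘ μ₁) B) atTop)
    (h₂ : ENNReal.ofReal α < liminf (fun t ↦ (π t ∘ₘ μ₂) B) atTop) :
    ∀ᶠ t in atTop, |∫ x, φ x ∂(π t ∘ₘ μ₁) - ∫ x, φ x ∂(π t ∘ₘ μ₂)| ≤ α * ε + (1 - α) * C := by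
  obtain ⟨s, hs, hs₁, hs₂⟩ := ((eventually_ge_atTop 0).and
    ((eventually_lt_of_lt_liminf h₁).and (eventually_lt_of_lt_liminf h₂))).exists
  have := hπ.isProbabilityMeasure_bind hs μ₁
  have := hπ.isProbabilityMeasure_bind hs μ₂
  obtain ⟨a₁, b₁, _, _, ha₁, hsplit₁⟩ :=
    (π s ∘ₘ μ₁).exists_eq_ofReal_smul_add_ofReal_smul hB hα₀ hα₁ hs₁
  obtain ⟨a₂, b₂, _, _, ha₂, hsplit₂⟩ :=
    (π s ∘ₘ μ₂).exists_eq_ofReal_smul_add_ofReal_smul hB hα₀ hα₁ hs₂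
  have hshift : Tendsto (fun t : ℝ ↦ t - s) atTop atTop :=
    tendsto_atTop_add_const_right _ (-s) tendsto_id
  filter_upwards [hshift.eventually (hC b₁ b₂ ‹_› ‹_›), eventually_ge_atTop s] with t hb hst
  have hts : 0 ≤ t - s := sub_nonneg.2 hst
  have hexpand : ∀ (μ a b : Measure X) [IsProbabilityMeasure a] [IsProbabilityMeasure b],
      π s ∘ₘ μ = ENNReal.ofReal α • a + ENNReal.ofReal (1 - α) • b →
      ∫ x, φ x ∂(π t ∘ₘ μ) =
        α * ∫ x, φ x ∂(π (t - s) ∘ₘ a) + (1 - α) * ∫ x, φ x ∂(π (t - s) ∘ₘ b) := by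
    intro μ a b _ _ hsplit
    rw [← hπ.bind_add_sub hs hst, hsplit]
    simp only [hπ.bind_eq_comp_kernel hts]
    rw [Measure.comp_add, Measure.comp_smul, Measure.comp_smul,
      integral_ofReal_smul_add_ofReal_smul (φ.integrable _) (φ.integrable _) hα₀ hα₁.le]
  have ha : |∫ x, φ x ∂(π (t - s) ∘ₘ a₁) - ∫ x, φ x ∂(π (t - s) ∘ₘ a₂)| ≤ ε := by
    simp only [hπ.bind_eq_comp_kernel hts]
    exact Kernel.abs_integral_comp_sub_integral_comp_le (φ.integrable _) (φ.integrable _) ha₁ ha₂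
      (hosc _ hts)
  rw [hexpand μ₁ a₁ b₁ hsplit₁, hexpand μ₂ a₂ b₂ hsplit₂]
  set A₁ := ∫ x, φ x ∂(π (t - s) ∘ₘ a₁)
  set A₂ := ∫ x, φ x ∂(π (t - s) ∘ₘ a₂)
  set B₁ := ∫ x, φ x ∂(π (t - s) ∘ₘ b₁)
  set B₂ := ∫ x, φ x ∂(π (t - s) ∘ₘ b₂)
  calc |α * A₁ + (1 - α) * B₁ - (α * A₂ + (1 - α) * B₂)|
      = |α * (A₁ - A₂) + (1 - α) * (B₁ - B₂)| := by ring_nf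
    _ ≤ α * |A₁ - A₂| + (1 - α) * |B₁ - B₂| := by
      grw [abs_add_le, abs_mul, abs_mul, abs_of_nonneg hα₀, abs_of_nonneg (sub_nonneg.2 hα₁.le)]
    _ ≤ α * ε + (1 - α) * C := by gcongr

theorem abs_integral_bind_sub_le (hπ : MarkovFellerSemigroup π) (ht : 0 ≤ t)
    (φ : BoundedContinuousFunction X ℝ) (μ₁ μ₂ : Measure X) [IsProbabilityMeasure μ₁]
    [IsProbabilityMeasure μ₂] :
    |∫ x, φ x ∂(π t ∘ₘ μ₁) - ∫ x, φ x ∂(π t ∘ₘ μ₂)| ≤ 2 * ‖φ‖ := by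
  have := hπ.isProbabilityMeasure_bind ht μ₁
  have := hπ.isProbabilityMeasure_bind ht μ₂
  calc |∫ x, φ x ∂(π t ∘ₘ μ₁) - ∫ x, φ x ∂(π t ∘ₘ μ₂)|
      ≤ |∫ x, φ x ∂(π t ∘ₘ μ₁)| + |∫ x, φ x ∂(π t ∘ₘ μ₂)| := abs_sub _ _
    _ ≤ ‖φ‖ + ‖φ‖ := add_le_add (φ.norm_integral_le_norm _) (φ.norm_integral_le_norm _)
    _ = 2 * ‖φ‖ := (two_mul _).symm

theorem eventually_abs_integral_bind_sub_le (hπ : MarkovFellerSemigroup π)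
    (φ : BoundedContinuousFunction X ℝ) {B : Set X} (hB : MeasurableSet B) {ε α : ℝ}
    (hα₀ : 0 ≤ α) (hα₁ : α < 1)
    (hosc : ∀ t, 0 ≤ t → ∀ x ∈ B, ∀ y ∈ B, |∫ v, φ v ∂(π t x) - ∫ v, φ v ∂(π t y)| ≤ ε)
    (hvisit : ∀ ν : Measure X, IsProbabilityMeasure ν →
      ENNReal.ofReal α < liminf (fun t ↦ (π t ∘ₘ ν) B) atTop)
    (n : ℕ) (μ₁ μ₂ : Measure X) [IsProbabilityMeasure μ₁] [IsProbabilityMeasure μ₂] :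
    ∀ᶠ t in atTop, |∫ x, φ x ∂(π t ∘ₘ μ₁) - ∫ x, φ x ∂(π t ∘ₘ μ₂)| ≤
      (1 - (1 - α) ^ n) * ε + (1 - α) ^ n * (2 * ‖φ‖) := by
  induction n generalizing μ₁ μ₂ with
  | zero =>
    filter_upwards [eventually_ge_atTop 0] with t ht
    simpa using hπ.abs_integral_bind_sub_le ht φ μ₁ μ₂
  | succ n ih =>
    filter_upwards [hπ.eventually_abs_integral_bind_sub_le_of_eventually_le φ hB hα₀ hα₁ hosc
      (fun ν₁ ν₂ _ _ ↦ ih ν₁ ν₂) (hvisit μ₁ ‹_›) (hvisit μ₂ ‹_›)] with t ht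
    exact ht.trans_eq (by ring)

end MarkovFellerSemigroup

theorem limsup_integral_diff_le_general
    {X : Type*} [MetricSpace X] [MeasurableSpace X] [BorelSpace X]
    (π : ℝ → X → Measure X) (hMFS : MarkovFellerSemigroup π)
    (φ : BoundedContinuousFunction X ℝ) (z : X) (δ ε α : ℝ)
    (hα : α ∈ Set.Ioo (0:ℝ) 1)
    (ha : ∀ t, 0 ≤ t → ∀ x ∈ Metric.ball z δ, ∀ y ∈ Metric.ball z δ,
      |(∫ v, φ v ∂(π t x)) - (∫ v, φ v ∂(π t y))| < ε)
    (hb : ∀ ν : Measure X, IsProbabilityMeasure ν →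
      ENNReal.ofReal α <
        Filter.liminf (fun t : ℝ => (ν.bind (π t)) (Metric.ball z δ)) atTop)
    (μ₁ μ₂ : Measure X) (h₁ : IsProbabilityMeasure μ₁) (h₂ : IsProbabilityMeasure μ₂) :
    Filter.limsup (fun t : ℝ =>
        |(∫ x, φ x ∂(μ₁.bind (π t))) - (∫ x, φ x ∂(μ₂.bind (π t)))|) atTop ≤ ε := by
  have hbound (n : ℕ) := limsup_le_of_le (isCoboundedUnder_le_of_le atTop fun _ ↦ abs_nonneg _)
    (hMFS.eventually_abs_integral_bind_sub_le φ measurableSet_ball hα.1.le hα.2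
      (fun t ht x hx y hy ↦ (ha t ht x hx y hy).le) hb n μ₁ μ₂)
  have hpow := tendsto_pow_atTop_nhds_zero_of_lt_one (sub_nonneg.2 hα.2.le) (sub_lt_self 1 hα.1)
  have hlim : Tendsto (fun n : ℕ ↦ (1 - (1 - α) ^ n) * ε + (1 - α) ^ n * (2 * ‖φ‖)) atTop
      (𝓝 ε) := by
    simpa using (((tendsto_const_nhds (x := (1 : ℝ))).sub hpow).mul_const ε).add
      (hpow.mul_const (2 * ‖φ‖))
  exact ge_of_tendsto' hlim hbound

/-- **The coupling estimate in the proof of Theorem 4.1.** If `|P_t φ(x) - P_t φ(y)| < ε`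
for all `t ≥ 0` and `x, y ∈ B(z,δ)`, and `liminf_{t→∞} P_t^* ν (B(z,δ)) > α` for every
Borel probability measure `ν`, then for all Borel probability measures `μ₁, μ₂`,
`limsup_{t→∞} |∫ φ dP_t^*μ₁ - ∫ φ dP_t^*μ₂| ≤ ε`. -/
theorem limsup_integral_diff_le
    {X : Type*} [MetricSpace X] [MeasurableSpace X] [BorelSpace X]
    (π : ℝ → X → Measure X) (hMFS : MarkovFellerSemigroup π)
    (φ : BoundedContinuousFunction X ℝ) (z : X) (δ ε α : ℝ)
    (hδ : 0 < δ) (hε : 0 < ε) (hα : α ∈ Set.Ioo (0:ℝ) 1)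
    (ha : ∀ t, 0 ≤ t → ∀ x ∈ Metric.ball z δ, ∀ y ∈ Metric.ball z δ,
      |(∫ v, φ v ∂(π t x)) - (∫ v, φ v ∂(π t y))| < ε)
    (hb : ∀ ν : Measure X, IsProbabilityMeasure ν →
      ENNReal.ofReal α <
        Filter.liminf (fun t : ℝ => (ν.bind (π t)) (Metric.ball z δ)) atTop)
    (μ₁ μ₂ : Measure X) (h₁ : IsProbabilityMeasure μ₁) (h₂ : IsProbabilityMeasure μ₂) :
    Filter.limsup (fun t : ℝ =>
        |(∫ x, φ x ∂(μ₁.bind (π t))) - (∫ x, φ x ∂(μ₂.bind (π t)))|) atTop ≤ ε :=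
  limsup_integral_diff_le_general π hMFS φ z δ ε α hα ha hb μ₁ μ₂ h₁ h₂
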